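/- Let c₁, …, cₙ be pairwise distinct real constants and u : ℝⁿ → ℝ smooth with u₁ ≠ 0 everywhere. For fixed λ ∈ ℝ distinct from all cᵢ, define vector fields Xⱼ = ∂_{x^j} − ((λ−c₁)/(λ−cⱼ))·(uⱼ/u₁)·∂_{x^1} for 1 < j ≤ n. Then for each pair 1 < j, k ≤ n the bracket [Xⱼ, X_k] is a multiple of ∂_{x^1}, and its coefficient vanishes for all such λ if and only if u satisfies the Veronese web equation with indices (1, j, k), namely (c₁−cⱼ)u_k u_{1j} + (cⱼ−c_k)u₁ u_{jk} + (c_k−c₁)uⱼ u_{1k} = 0; in particular, [Xⱼ, X_k] = 0 for all 1 < j, k ≤ n and all such λ if and only if these Veronese web equations hold for all triples (1, j, k). -/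

import Mathlib

/-- Partial derivative of a function on `ℝⁿ`. -/
noncomputable def pd {n : ℕ} (u : (Fin n → ℝ) → ℝ) (i : Fin n) (x : Fin n → ℝ) : ℝ :=
  fderiv ℝ u x (Pi.single i 1)

/-- Lie bracket of vector fields on `ℝⁿ`. -/
noncomputable def bracket {n : ℕ} (X Y : (Fin n → ℝ) → (Fin n → ℝ))
    (p : Fin n → ℝ) : Fin n → ℝ :=
  fderiv ℝ Y p (X p) - fderiv ℝ X p (Y p)

/-- The Lax vector field `Xⱼ = ∂_{x^j} − ((λ−c₁)/(λ−cⱼ))·(uⱼ/u₁)·∂_{x^1}` of the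
Veronese web hierarchy (index `o` plays the role of `1`). -/
noncomputable def lax {n : ℕ} (c : Fin n → ℝ) (u : (Fin n → ℝ) → ℝ) (o j : Fin n)
    (lam : ℝ) (p : Fin n → ℝ) : Fin n → ℝ :=
  (Pi.single j 1 : Fin n → ℝ)
    - (((lam - c o) / (lam - c j)) * (pd u j p / pd u o p)) • (Pi.single o 1 : Fin n → ℝ)

lemma pd_contDiff {n : ℕ} {u : (Fin n → ℝ) → ℝ} (hu : ContDiff ℝ (⊤ : ℕ∞) u) (i : Fin n) :
    ContDiff ℝ (⊤ : ℕ∞) (pd u i) :=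
  (hu.fderiv_right (by simp)).clm_apply contDiff_const

lemma pd_comm {n : ℕ} {u : (Fin n → ℝ) → ℝ} (hu : ContDiff ℝ (⊤ : ℕ∞) u) (a b : Fin n)
    (p : Fin n → ℝ) : pd (pd u a) b p = pd (pd u b) a p := by
  have hd1 : Differentiable ℝ u := hu.differentiable (by simp)
  have hdf : Differentiable ℝ (fderiv ℝ u) := (hu.fderiv_right (m := (⊤ : ℕ∞)) (by simp)).differentiable (by simp)
  have key : ∀ (i : Fin n) (v : Fin n → ℝ), fderiv ℝ (pd u i) p v
      = fderiv ℝ (fderiv ℝ u) p v (Pi.single i 1) := by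
    intro i v
    have h := fderiv_clm_apply (hdf p) (differentiableAt_const (Pi.single i 1 : Fin n → ℝ))
    have : fderiv ℝ (pd u i) p = fderiv ℝ (fun q => (fderiv ℝ u q) (Pi.single i 1)) p := rfl
    rw [this, h]
    simp
  show fderiv ℝ (pd u a) p (Pi.single b 1) = fderiv ℝ (pd u b) p (Pi.single a 1)
  rw [key, key]
  exact second_derivative_symmetric (fun y => (hd1 y).hasFDerivAt) (hdf p).hasFDerivAt _ _



-- HasFDerivAt for the coefficient function
lemma coef_hasFDeriv {n : ℕ} {u : (Fin n → ℝ) → ℝ} (hu : ContDiff ℝ (⊤ : ℕ∞) u)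
    {o : Fin n} (hu1 : ∀ p, pd u o p ≠ 0) (i : Fin n) (μ : ℝ) (p : Fin n → ℝ) :
    HasFDerivAt (fun q => μ * (pd u i q / pd u o q))
      (fderiv ℝ (fun q => μ * (pd u i q / pd u o q)) p) p ∧
    ∀ v, fderiv ℝ (fun q => μ * (pd u i q / pd u o q)) p v
      = μ * ((fderiv ℝ (pd u i) p v * pd u o p - pd u i p * fderiv ℝ (pd u o) p v)
          / (pd u o p) ^ 2) := by
  have hdi : HasFDerivAt (pd u i) (fderiv ℝ (pd u i) p) p :=
    (((pd_contDiff hu i).differentiable (by simp)) p).hasFDerivAt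
  have hdo : HasFDerivAt (pd u o) (fderiv ℝ (pd u o) p) p :=
    (((pd_contDiff hu o).differentiable (by simp)) p).hasFDerivAt
  have hinv : HasFDerivAt (fun q => (pd u o q)⁻¹)
      ((-(ContinuousLinearMap.mulLeftRight ℝ ℝ (pd u o p)⁻¹ (pd u o p)⁻¹)).comp
        (fderiv ℝ (pd u o) p)) p :=
    (hasFDerivAt_inv' (𝕜 := ℝ) (hu1 p)).comp p hdo
  have hmul : HasFDerivAt (fun q => μ * (pd u i q * (pd u o q)⁻¹)) _ p := (hdi.mul hinv).const_mul μ
  have heq : (fun q => μ * (pd u i q / pd u o q))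
      = (fun q => μ * (pd u i q * (pd u o q)⁻¹)) := by
    funext q; rw [div_eq_mul_inv]
  rw [heq]
  refine ⟨hmul.differentiableAt.hasFDerivAt, fun v => ?_⟩
  rw [hmul.fderiv]
  simp only [ContinuousLinearMap.smul_apply, ContinuousLinearMap.add_apply,
    ContinuousLinearMap.comp_apply, ContinuousLinearMap.neg_apply,
    ContinuousLinearMap.mulLeftRight_apply, smul_eq_mul]
  field_simp [hu1 p]
  ring

/-- Dispersionless Lax representation of the Veronese web hierarchy: the bracket
`[Xⱼ, X_k]` is a multiple of `∂_{x^1}`, and it vanishes for all admissible `λ` if and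
only if the Veronese web equation with indices `(1, j, k)` holds identically. -/
theorem veronese_lax (n : ℕ) (h0 : 0 < n) (c : Fin n → ℝ) (hc : Function.Injective c)
    (u : (Fin n → ℝ) → ℝ) (hu : ContDiff ℝ (⊤ : ℕ∞) u)
    (hu1 : ∀ p, pd u ⟨0, h0⟩ p ≠ 0)
    (j k : Fin n) (hj : j ≠ ⟨0, h0⟩) (hk : k ≠ ⟨0, h0⟩) (hjk : j ≠ k) :
    (∀ lam : ℝ, (∀ i, lam ≠ c i) → ∀ (p : Fin n → ℝ) (m : Fin n), m ≠ ⟨0, h0⟩ →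
      bracket (lax c u ⟨0, h0⟩ j lam) (lax c u ⟨0, h0⟩ k lam) p m = 0) ∧
    ((∀ lam : ℝ, (∀ i, lam ≠ c i) → ∀ p : Fin n → ℝ,
        bracket (lax c u ⟨0, h0⟩ j lam) (lax c u ⟨0, h0⟩ k lam) p = 0) ↔
      (∀ p : Fin n → ℝ,
        (c ⟨0, h0⟩ - c j) * pd u k p * pd (pd u ⟨0, h0⟩) j p
          + (c j - c k) * pd u ⟨0, h0⟩ p * pd (pd u j) k p
          + (c k - c ⟨0, h0⟩) * pd u j p * pd (pd u ⟨0, h0⟩) k p = 0)) := by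
  set o : Fin n := ⟨0, h0⟩ with ho
  -- derivative of the Lax fields
  have hX : ∀ (i : Fin n) (lam : ℝ) (p : Fin n → ℝ),
      HasFDerivAt (lax c u o i lam)
        (-((fderiv ℝ (fun q => ((lam - c o) / (lam - c i)) * (pd u i q / pd u o q)) p).smulRight
            (Pi.single o 1 : Fin n → ℝ))) p := by
    intro i lam p
    have h1 := (coef_hasFDeriv hu hu1 i ((lam - c o) / (lam - c i)) p).1
    exact (h1.smul_const (Pi.single o 1 : Fin n → ℝ)).const_sub (Pi.single i 1 : Fin n → ℝ)
  -- bracket formula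
  have hbr : ∀ (lam : ℝ) (p : Fin n → ℝ),
      bracket (lax c u o j lam) (lax c u o k lam) p
        = (fderiv ℝ (fun q => ((lam - c o) / (lam - c j)) * (pd u j q / pd u o q)) p
              (lax c u o k lam p)
            - fderiv ℝ (fun q => ((lam - c o) / (lam - c k)) * (pd u k q / pd u o q)) p
              (lax c u o j lam p)) • (Pi.single o 1 : Fin n → ℝ) := by
    intro lam p
    show fderiv ℝ (lax c u o k lam) p (lax c u o j lam p)
        - fderiv ℝ (lax c u o j lam) p (lax c u o k lam p) = _
    rw [(hX k lam p).fderiv, (hX j lam p).fderiv]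
    simp only [ContinuousLinearMap.neg_apply, ContinuousLinearMap.smulRight_apply]
    rw [sub_smul]
    abel
  -- value of the coefficient
  have hC : ∀ (lam : ℝ) (p : Fin n → ℝ), (∀ i, lam ≠ c i) →
      fderiv ℝ (fun q => ((lam - c o) / (lam - c j)) * (pd u j q / pd u o q)) p
          (lax c u o k lam p)
        - fderiv ℝ (fun q => ((lam - c o) / (lam - c k)) * (pd u k q / pd u o q)) p
          (lax c u o j lam p)
      = (lam - c o) * ((c o - c j) * pd u k p * pd (pd u o) j p
            + (c j - c k) * pd u o p * pd (pd u j) k p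
            + (c k - c o) * pd u j p * pd (pd u o) k p)
        / ((lam - c j) * (lam - c k) * (pd u o p) ^ 2) := by
    intro lam p hlam
    have hlin : ∀ (g : (Fin n → ℝ) → ℝ) (m : Fin n) (t : ℝ),
        fderiv ℝ g p ((Pi.single m 1 : Fin n → ℝ) - t • (Pi.single o 1 : Fin n → ℝ))
          = pd g m p - t * pd g o p := by
      intro g m t
      rw [map_sub, map_smul, smul_eq_mul]; rfl
    have hlk : lax c u o k lam p = (Pi.single k 1 : Fin n → ℝ)
        - (((lam - c o) / (lam - c k)) * (pd u k p / pd u o p)) •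
          (Pi.single o 1 : Fin n → ℝ) := rfl
    have hlj : lax c u o j lam p = (Pi.single j 1 : Fin n → ℝ)
        - (((lam - c o) / (lam - c j)) * (pd u j p / pd u o p)) •
          (Pi.single o 1 : Fin n → ℝ) := rfl
    rw [(coef_hasFDeriv hu hu1 j ((lam - c o) / (lam - c j)) p).2,
      (coef_hasFDeriv hu hu1 k ((lam - c o) / (lam - c k)) p).2, hlk, hlj, hlin, hlin,
      hlin, hlin, pd_comm hu k j p, pd_comm hu k o p, pd_comm hu j o p]
    have h1 : lam - c j ≠ 0 := sub_ne_zero.2 (hlam j)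
    have h2 : lam - c k ≠ 0 := sub_ne_zero.2 (hlam k)
    have h3 : pd u o p ≠ 0 := hu1 p
    field_simp
    ring
  refine ⟨?_, ?_, ?_⟩
  · intro lam hlam p m hm
    rw [hbr lam p]
    simp [Pi.single_eq_of_ne hm]
  · intro h p
    obtain ⟨lam, hlam⟩ : ∃ lam : ℝ, ∀ i, lam ≠ c i := by
      obtain ⟨lam, hlam⟩ := (Set.finite_range c).infinite_compl.nonempty
      exact ⟨lam, fun i hi => hlam ⟨i, hi.symm⟩⟩
    have hb := h lam hlam p
    rw [hbr lam p] at hb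
    have h0' := congrFun hb o
    simp only [Pi.smul_apply, Pi.single_eq_same, smul_eq_mul, mul_one, Pi.zero_apply] at h0'
    rw [hC lam p hlam] at h0'
    rcases div_eq_zero_iff.1 h0' with h1 | h2
    · rcases mul_eq_zero.1 h1 with h3 | h4
      · exact absurd (sub_eq_zero.1 h3) (hlam o)
      · exact h4
    · exact absurd h2 (mul_ne_zero (mul_ne_zero (sub_ne_zero.2 (hlam j))
        (sub_ne_zero.2 (hlam k))) (pow_ne_zero 2 (hu1 p)))
  · intro hE lam hlam p
    rw [hbr lam p, hC lam p hlam, hE p]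
    simp
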